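/- arXiv:2001.00518 — 5 statements merged into one kernel-verified Lean document; each statement's English description precedes it below -/
import Mathlib

section
/- Let (Y, τ) be a topological space, (Z, 𝒰) a uniform space, and 𝔗 a topology on EC(Y,Z). Then 𝔗 is admissible if and only if for every topological space (X, μ) and every map g* : X → EC(Y,Z), continuity of g* implies equi-continuity of the associated map g : X × Y → Z defined by g(x,y) = g*(x)(y). -/
universe u

/-- A function from a topological space to a uniform space is *equi-continuous*
if for each point `w` and each entourage `U` there is an open neighbourhood `V` of
`w` with `h(V) ⊆ U[h(w)]`. -/
def EquiContinuous {W : Type*} {Z : Type*} [TopologicalSpace W] [UniformSpace Z]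
    (h : W → Z) : Prop :=
  ∀ w : W, ∀ U ∈ uniformity Z, ∃ V : Set W, IsOpen V ∧ w ∈ V ∧ ∀ v ∈ V, (h w, h v) ∈ U

/-- `EC Y Z` is the set of all equi-continuous functions from `Y` to `Z`. -/
def EC (Y Z : Type u) [TopologicalSpace Y] [UniformSpace Z] : Set (Y → Z) :=
  {f | EquiContinuous f}

/-- A topology `T` on `EC(Y,Z)` is *admissible* if the evaluation map
`e : EC(Y,Z) × Y → Z`, `e(f,y) = f(y)`, is equi-continuous (with the product
topology of `T` and the topology of `Y`). -/
def Admissible {Y Z : Type u} [TopologicalSpace Y] [UniformSpace Z]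
    (T : TopologicalSpace ↥(EC Y Z)) : Prop :=
  letI := T
  EquiContinuous (fun p : ↥(EC Y Z) × Y => p.1.1 p.2)

/-- A topology `T` on `EC(Y,Z)` is *splitting* if for every topological space `X`,
equi-continuity of a map `g : X × Y → Z` implies continuity of the associated map
`g* : X → EC(Y,Z)`, `g*(x)(y) = g(x,y)`. -/
def Splitting {Y Z : Type u} [TopologicalSpace Y] [UniformSpace Z]
    (T : TopologicalSpace ↥(EC Y Z)) : Prop :=
  ∀ (X : Type u) [TopologicalSpace X] (g' : X → ↥(EC Y Z)),
    EquiContinuous (fun p : X × Y => (g' p.1).1 p.2) →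
    letI := T
    Continuous g'

theorem EquiContinuous.comp_continuous {W W' Z : Type*} [TopologicalSpace W]
    [TopologicalSpace W'] [UniformSpace Z] {h : W → Z} (hh : EquiContinuous h) {φ : W' → W}
    (hφ : Continuous φ) : EquiContinuous (h ∘ φ) := by
  intro w U hU
  obtain ⟨V, hV, hwV, hVU⟩ := hh (φ w) U hU
  exact ⟨φ ⁻¹' V, hV.preimage hφ, hwV, fun v hv => hVU _ hv⟩

/-- a topology `T` on `EC(Y,Z)` is admissible iff for every
topological space `X` and every map `g* : X → EC(Y,Z)`, continuity of `g*` implies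
equi-continuity of the associated map `g : X × Y → Z`, `g(x,y) = g*(x)(y)`. -/
theorem admissible_iff {Y Z : Type u} [TopologicalSpace Y] [UniformSpace Z]
    (T : TopologicalSpace ↥(EC Y Z)) :
    Admissible T ↔
      ∀ (X : Type u) [TopologicalSpace X] (g' : X → ↥(EC Y Z)),
        (letI := T; Continuous g') →
        EquiContinuous (fun p : X × Y => (g' p.1).1 p.2) := by
  let _ := T
  constructor
  · intro hadm X _ g' hg'
    exact hadm.comp_continuous ((hg'.comp continuous_fst).prodMk continuous_snd)
  · intro h
    exact h _ id continuous_id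
end

section
/- Let (Y, τ) be a topological space, (Z, 𝒰) a uniform space, and 𝔗 a topology on EC(Y,Z). Then 𝔗 is splitting if and only if for every net {f_n}_{n∈Δ} in EC(Y,Z) and every f ∈ EC(Y,Z), equi-continuous convergence of {f_n}_{n∈Δ} to f implies that {f_n}_{n∈Δ} converges to f in the topology 𝔗. -/
universe u

/-- A net `F : Δ → EC(Y,Z)` *equi-continuously converges* to `f ∈ EC(Y,Z)` if
for every net `{y_m}_{m ∈ σ}` in `Y` converging to a point `y`, the net
`{F_n(y_m)}` indexed by the product directed set `Δ × σ` converges to `f(y)` in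
`Z`, i.e., for each entourage `U`, eventually `(f(y), F_n(y_m)) ∈ U`. -/
def EquiConv {Y Z : Type u} [TopologicalSpace Y] [UniformSpace Z]
    {Δ : Type u} [Preorder Δ] (F : Δ → ↥(EC Y Z)) (f : ↥(EC Y Z)) : Prop :=
  ∀ (σ : Type u) [Nonempty σ] [Preorder σ] [IsDirected σ (· ≤ ·)] (ys : σ → Y) (y : Y),
    (∀ V : Set Y, IsOpen V → y ∈ V → ∃ m₀, ∀ m, m₀ ≤ m → ys m ∈ V) →
    ∀ U ∈ uniformity Z, ∃ n₀ : Δ, ∃ m₀ : σ, ∀ n, n₀ ≤ n → ∀ m, m₀ ≤ m →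
      (f.1 y, (F n).1 (ys m)) ∈ U

/-- A net `F : Δ → EC(Y,Z)` converges to `f` in the topology `T` on `EC(Y,Z)` if
`F` is eventually in every `T`-open set containing `f`. -/
def NetConvIn {Y Z : Type u} [TopologicalSpace Y] [UniformSpace Z]
    (T : TopologicalSpace ↥(EC Y Z)) {Δ : Type u} [Preorder Δ]
    (F : Δ → ↥(EC Y Z)) (f : ↥(EC Y Z)) : Prop :=
  ∀ H : Set ↥(EC Y Z), (letI := T; IsOpen H) → f ∈ H → ∃ n₀, ∀ n, n₀ ≤ n → F n ∈ H

/-!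
Equi-continuity of a map into a uniform space is plain continuity, so `EC Y Z` is the space of
continuous maps and a topology is splitting when continuity of `g : X × Y → Z` forces continuity
of `g*`. Given a net `F → f` that converges equi-continuously, adjoin a limit point to its index
set: on `Option Δ`, with `none` the limit of `some` along `atTop`, equi-continuous convergence is
exactly continuity of `(o, y) ↦ (o.elim f F) y` at the points `(none, y)`, so splitting gives
`F → f`. Conversely, if `g*` were discontinuous at `x`, choosing in every neighbourhood of `x` a
point sent outside a fixed open set around `g* x` gives a net converging to `x`; continuity of
`g` makes its image converge equi-continuously to `g* x`, hence in the topology, a contradiction.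
-/

open Filter Topology TopologicalSpace

instance Prod.isDirectedOrder {α β : Type*} [Preorder α] [Preorder β] [IsDirectedOrder α]
    [IsDirectedOrder β] : IsDirectedOrder (α × β) where
  directed a b :=
    let ⟨c₁, ha₁, hb₁⟩ := exists_ge_ge a.1 b.1
    let ⟨c₂, ha₂, hb₂⟩ := exists_ge_ge a.2 b.2
    ⟨(c₁, c₂), ⟨ha₁, ha₂⟩, ⟨hb₁, hb₂⟩⟩

theorem equiContinuous_iff_continuous {W Z : Type*} [TopologicalSpace W] [UniformSpace Z]
    {h : W → Z} : EquiContinuous h ↔ Continuous h := by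
  simp_rw [continuous_iff_continuousAt, ContinuousAt, Uniform.tendsto_nhds_right,
    tendsto_iff_forall_eventually_mem, (nhds_basis_opens _).eventually_iff, EquiContinuous,
    and_comm (b := IsOpen _), and_assoc]

theorem tendsto_nhds_of_mem_openNhdsOf {X ι : Type*} [TopologicalSpace X] {x : X} {l : Filter ι}
    {k : ι → (OpenNhdsOf x)ᵒᵈ} {xs : ι → X} (hk : Tendsto k l atTop)
    (hxs : ∀ i, xs i ∈ OrderDual.ofDual (k i)) : Tendsto xs l (𝓝 x) := by
  refine (nhds_basis_opens x).tendsto_right_iff.2 fun V ⟨hxV, hV⟩ => ?_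
  filter_upwards [hk.eventually_ge_atTop (OrderDual.toDual ⟨⟨V, hV⟩, hxV⟩)] with i hi
  exact hi (hxs i)

theorem continuousAt_of_forall_tendsto_openNhdsOf {X S : Type*} [TopologicalSpace X]
    [TopologicalSpace S] {φ : X → S} {x : X}
    (h : ∀ xs : (OpenNhdsOf x)ᵒᵈ → X, Tendsto xs atTop (𝓝 x) → Tendsto (φ ∘ xs) atTop (𝓝 (φ x))) :
    ContinuousAt φ x := by
  by_contra hφ
  obtain ⟨H, hH, hfreq⟩ := not_tendsto_iff_exists_frequently_notMem.1 hφ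
  have hbad (V : (OpenNhdsOf x)ᵒᵈ) : ∃ x' ∈ OrderDual.ofDual V, φ x' ∉ H :=
    (nhds_basis_opens x).frequently_iff.1 hfreq _
      ⟨(OrderDual.ofDual V).mem, (OrderDual.ofDual V).isOpen⟩
  choose xs hxs hxsH using hbad
  have hgood := h xs (tendsto_nhds_of_mem_openNhdsOf tendsto_id hxs)
  obtain ⟨V, hV⟩ := (hgood.eventually_mem hH).exists
  exact hxsH V hV

/-- In `nhdsAdjoint none (l.map some)` every `some n` is isolated and `some` tends to `none`
along `l`. -/
theorem continuous_uncurry_option_nhdsAdjoint {Δ Y Z : Type*} [TopologicalSpace Y]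
    [TopologicalSpace Z] {l : Filter Δ} {g : Option Δ → Y → Z}
    (hsome : ∀ n, Continuous (g (some n))) (hnone : Continuous (g none))
    (hlim : ∀ y, Tendsto (fun p : Δ × Y => g (some p.1) p.2) (l ×ˢ 𝓝 y) (𝓝 (g none y))) :
    letI := nhdsAdjoint none (l.map some)
    Continuous fun p : Option Δ × Y => g p.1 p.2 := by
  let := nhdsAdjoint none (l.map some)
  refine continuous_iff_continuousAt.2 fun ⟨o, y⟩ => ?_
  cases o with
  | none =>
    rw [ContinuousAt, nhds_prod_eq, nhds_nhdsAdjoint_same, sup_prod, tendsto_sup, pure_prod,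
      prod_map_left, tendsto_map'_iff, tendsto_map'_iff]
    exact ⟨hnone.tendsto y, hlim y⟩
  | some n =>
    rw [ContinuousAt, nhds_prod_eq, nhds_nhdsAdjoint_of_ne _ (Option.some_ne_none n), pure_prod,
      tendsto_map'_iff]
    exact (hsome n).tendsto y

section

variable {Y Z : Type u} [TopologicalSpace Y] [UniformSpace Z]

theorem netConvIn_iff_tendsto (T : TopologicalSpace (EC Y Z)) {Δ : Type u} [Preorder Δ]
    [IsDirectedOrder Δ] [Nonempty Δ] (F : Δ → EC Y Z) (f : EC Y Z) :
    NetConvIn T F f ↔ Tendsto F atTop (@nhds _ T f) := by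
  simp only [(@nhds_basis_opens _ T f).tendsto_right_iff, eventually_atTop, NetConvIn]
  exact ⟨fun h H ⟨hfH, hH⟩ => h H hH hfH, fun h H hH hfH => h H ⟨hfH, hH⟩⟩

theorem equiConv_iff_tendsto {Δ : Type u} [Preorder Δ] [IsDirectedOrder Δ] [Nonempty Δ]
    (F : Δ → EC Y Z) (f : EC Y Z) :
    EquiConv F f ↔ ∀ (σ : Type u) [Nonempty σ] [Preorder σ] [IsDirectedOrder σ] (ys : σ → Y)
      (y : Y), Tendsto ys atTop (𝓝 y) →
        Tendsto (fun p : Δ × σ => (F p.1).1 (ys p.2)) (atTop ×ˢ atTop) (𝓝 (f.1 y)) := by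
  constructor
  · intro h σ _ _ _ ys y hys
    refine Uniform.tendsto_nhds_right.2 fun U hU => ?_
    obtain ⟨n₀, m₀, hU'⟩ :=
      h σ ys y (fun V hV hyV => eventually_atTop.1 (hys (hV.mem_nhds hyV))) U hU
    exact ((eventually_ge_atTop n₀).prod_mk (eventually_ge_atTop m₀)).mono
      fun p hp => hU' _ hp.1 _ hp.2
  · intro h σ _ _ _ ys y hys U hU
    have hys' : Tendsto ys atTop (𝓝 y) :=
      tendsto_nhds.2 fun V hV hyV => eventually_atTop.2 (hys V hV hyV)
    obtain ⟨⟨n₀, m₀⟩, -, hU'⟩ := (atTop_basis.prod atTop_basis).eventually_iff.1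
      (Uniform.tendsto_nhds_right.1 (h σ ys y hys') hU)
    exact ⟨n₀, m₀, fun n hn m hm => hU' (x := (n, m)) ⟨hn, hm⟩⟩

theorem EquiConv.tendsto_uncurry {Δ : Type u} [Preorder Δ] [IsDirectedOrder Δ] [Nonempty Δ]
    {F : Δ → EC Y Z} {f : EC Y Z} (hF : EquiConv F f) (y : Y) :
    Tendsto (fun p : Δ × Y => (F p.1).1 p.2) (atTop ×ˢ 𝓝 y) (𝓝 (f.1 y)) := by
  by_contra hFy
  obtain ⟨U, hU, hfreq⟩ := not_tendsto_iff_exists_frequently_notMem.1 hFy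
  have hbad (i : Δ × (OpenNhdsOf y)ᵒᵈ) :
      ∃ p : Δ × Y, (i.1 ≤ p.1 ∧ p.2 ∈ OrderDual.ofDual i.2) ∧ (F p.1).1 p.2 ∉ U :=
    (atTop_basis.prod (nhds_basis_opens y)).frequently_iff.1 hfreq
      (i.1, (OrderDual.ofDual i.2 : OpenNhdsOf y))
      ⟨trivial, (OrderDual.ofDual i.2).mem, (OrderDual.ofDual i.2).isOpen⟩
  choose c hc hcU using hbad
  -- `(c i).2 → y`, so equi-convergence along the diagonal `i ↦ ((c i).1, i)` makes `c i` good.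
  have hatTop : (atTop : Filter (Δ × (OpenNhdsOf y)ᵒᵈ)) = atTop ×ˢ atTop :=
    prod_atTop_atTop_eq.symm
  have hys : Tendsto (fun i => (c i).2) atTop (𝓝 y) :=
    tendsto_nhds_of_mem_openNhdsOf (hatTop ▸ tendsto_snd) fun i => (hc i).2
  have hdiag : Tendsto (fun i => ((c i).1, i)) atTop (atTop ×ˢ atTop) :=
    (tendsto_atTop_mono (fun i => (hc i).1) (hatTop ▸ tendsto_fst)).prodMk tendsto_id
  have hgood := ((equiConv_iff_tendsto F f).1 hF _ _ y hys).comp hdiag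
  obtain ⟨i, hi⟩ := (hgood.eventually_mem hU).exists
  exact hcU i hi

theorem equiConv_of_continuous_uncurry {X : Type u} [TopologicalSpace X] {g' : X → EC Y Z}
    (hg : Continuous fun p : X × Y => (g' p.1).1 p.2) {Δ : Type u} [Preorder Δ]
    [IsDirectedOrder Δ] [Nonempty Δ] {xs : Δ → X} {x : X} (hxs : Tendsto xs atTop (𝓝 x)) :
    EquiConv (g' ∘ xs) (g' x) :=
  (equiConv_iff_tendsto _ _).2 fun _ _ _ _ _ y hys =>
    (hg.tendsto (x, y)).comp ((hxs.prodMap hys).mono_right nhds_prod_eq.ge)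

end

/-- a topology `T` on `EC(Y,Z)` is splitting iff for every net
`{f_n}` in `EC(Y,Z)` and every `f ∈ EC(Y,Z)`, equi-continuous convergence of
`{f_n}` to `f` implies convergence of `{f_n}` to `f` in `T`. -/
theorem splitting_iff_equiConv_implies_conv {Y Z : Type u} [TopologicalSpace Y]
    [UniformSpace Z] (T : TopologicalSpace ↥(EC Y Z)) :
    Splitting T ↔
      ∀ (Δ : Type u) [Nonempty Δ] [Preorder Δ] [IsDirected Δ (· ≤ ·)]
        (F : Δ → ↥(EC Y Z)) (f : ↥(EC Y Z)),
        EquiConv F f → NetConvIn T F f := by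
  constructor
  · intro hs Δ _ _ _ F f hF
    let := nhdsAdjoint (none : Option Δ) (map some atTop)
    have hG := continuous_uncurry_option_nhdsAdjoint (g := fun o => (o.elim f F).1)
      (fun n => equiContinuous_iff_continuous.1 (F n).2) (equiContinuous_iff_continuous.1 f.2)
      hF.tendsto_uncurry
    have hcont := hs (Option Δ) (fun o => o.elim f F) (equiContinuous_iff_continuous.2 hG)
    exact (netConvIn_iff_tendsto T F f).2 (tendsto_map'_iff.1 (continuous_nhdsAdjoint_dom.1 hcont))
  · intro h X _ g' hg
    let := T
    refine continuous_iff_continuousAt.2 fun x => continuousAt_of_forall_tendsto_openNhdsOf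
      fun xs hxs => (netConvIn_iff_tendsto T _ _).1 (h _ _ _ ?_)
    exact equiConv_of_continuous_uncurry (equiContinuous_iff_continuous.1 hg) hxs
end

section
/- Let (Y, τ) be a topological space and (Z, 𝒰) a uniform space. The open-entourage topology on EC(Y,Z), i.e., the topology generated by the subbasis {(V,U)_z : z ∈ Z, V ∈ τ, U ∈ 𝒰} where (V,U)_z = {f ∈ EC(Y,Z) : f(V) ⊆ U[z]}, is admissible. -/
universe u

/-- The *open-entourage topology* on `EC(Y,Z)`: the topology generated by the
subbasis of all sets `(V,U)_z = {f ∈ EC(Y,Z) | f(V) ⊆ U[z]}` with `z ∈ Z`,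
`V` open in `Y` and `U` an entourage of `Z`. -/
def openEntourageTopology (Y Z : Type u) [TopologicalSpace Y] [UniformSpace Z] :
    TopologicalSpace ↥(EC Y Z) :=
  TopologicalSpace.generateFrom
    {S | ∃ (z : Z) (V : Set Y) (U : Set (Z × Z)), IsOpen V ∧ U ∈ uniformity Z ∧
      S = {f : ↥(EC Y Z) | ∀ v ∈ V, (z, f.1 v) ∈ U}}

section

open scoped Topology

variable {Y Z : Type u} [TopologicalSpace Y] [UniformSpace Z]

theorem isOpen_openEntourageTopology_setOf {z : Z} {V : Set Y} {U : Set (Z × Z)}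
    (hV : IsOpen V) (hU : U ∈ uniformity Z) :
    IsOpen[openEntourageTopology Y Z] {f : EC Y Z | ∀ v ∈ V, (z, f.1 v) ∈ U} :=
  TopologicalSpace.isOpen_generateFrom_of_mem ⟨z, V, U, hV, hU, rfl⟩

end

/-- the open-entourage topology on `EC(Y,Z)` is admissible. -/
theorem openEntourageTopology_admissible {Y Z : Type u} [TopologicalSpace Y]
    [UniformSpace Z] : Admissible (openEntourageTopology Y Z) := by
  let _ := openEntourageTopology Y Z
  rintro ⟨f, y⟩ U hU
  obtain ⟨V, hV, hyV, hfV⟩ := f.2 y U hU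
  exact ⟨{g : EC Y Z | ∀ v ∈ V, (f.1 y, g.1 v) ∈ U} ×ˢ V,
    (isOpen_openEntourageTopology_setOf hV hU).prod hV, ⟨hfV, hyV⟩,
    fun p hp => hp.1 p.2 hp.2⟩
end

section
/- Let (Y, τ) be a topological space and (Z, 𝒰) a uniform space. The point-transitive-entourage topology on EC(Y,Z), i.e., the topology generated by the subbasis {(y,U_t)_z : z ∈ Z, y ∈ Y, U_t ∈ 𝒰 with U_t ∘ U_t ⊆ U_t} where (y,U_t)_z = {f ∈ EC(Y,Z) : f(y) ∈ U_t[z]}, is splitting. -/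
universe u

/-- The *point-transitive-entourage topology* on `EC(Y,Z)`: the topology generated
by the subbasis of all sets `(y,U_t)_z = {f ∈ EC(Y,Z) | f(y) ∈ U_t[z]}` with
`z ∈ Z`, `y ∈ Y` and `U_t` a transitive entourage of `Z` (`U_t ∘ U_t ⊆ U_t`). -/
def pointTransitiveEntourageTopology (Y Z : Type u) [TopologicalSpace Y]
    [UniformSpace Z] : TopologicalSpace ↥(EC Y Z) :=
  TopologicalSpace.generateFrom
    {S | ∃ (z : Z) (y : Y) (U : Set (Z × Z)), U ∈ uniformity Z ∧ SetRel.comp U U ⊆ U ∧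
      S = {f : ↥(EC Y Z) | (z, f.1 y) ∈ U}}

/-! Equi-continuity is just continuity (the balls `U[h w]` form a neighbourhood basis), so each
section `x ↦ g(x,y)` of an equi-continuous `g` is continuous. For a transitive entourage `U` the
ball `U[z]` is open, since `U[w] ⊆ U[z]` for every `w ∈ U[z]`; hence every subbasic set `(y,U)_z`
pulls back under `g*` to the open set `{x | g(x,y) ∈ U[z]}`. -/

open Uniformity UniformSpace

theorem EquiContinuous.continuous {W Z : Type*} [TopologicalSpace W] [UniformSpace Z]
    {h : W → Z} (hh : EquiContinuous h) : Continuous h := by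
  refine continuous_iff_continuousAt.2 fun w => ?_
  refine (nhds_basis_uniformity' (𝓤 Z).basis_sets).tendsto_right_iff.2 fun U hU => ?_
  obtain ⟨V, hVopen, hwV, hV⟩ := hh w U hU
  exact Filter.mem_of_superset (hVopen.mem_nhds hwV) hV

theorem UniformSpace.isOpen_ball_of_isTrans {Z : Type*} [UniformSpace Z] {U : SetRel Z Z}
    [U.IsTrans] (hU : U ∈ 𝓤 Z) (z : Z) : IsOpen (ball z U) :=
  isOpen_iff_mem_nhds.2 fun _ hw =>
    Filter.mem_of_superset (ball_mem_nhds _ hU) fun _ hv => U.trans hw hv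

/-- the point-transitive-entourage topology on `EC(Y,Z)` is
splitting. -/
theorem pointTransitiveEntourageTopology_splitting {Y Z : Type u} [TopologicalSpace Y]
    [UniformSpace Z] : Splitting (pointTransitiveEntourageTopology Y Z) := by
  intro X _ g' hg
  rw [pointTransitiveEntourageTopology, continuous_generateFrom_iff]
  rintro S ⟨z, y, U, hU, hUt, rfl⟩
  have : SetRel.IsTrans U := SetRel.isTrans_iff_comp_subset_self.2 hUt
  have hsection : Continuous fun x => (g' x).1 y :=
    hg.continuous.comp (Continuous.prodMk_left y)
  exact (isOpen_ball_of_isTrans hU z).preimage hsection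
end

section
/- Let (Y, τ) be a topological space, (Z, 𝒰) a uniform space, and fix a selection U(f,y) of open witnesses of equi-continuity. A topology 𝕋 on 𝒪_Z(Y) is splitting if and only if its dual topology 𝔗(𝕋) on EC(Y,Z) (generated by the subbasis {(ℍ,U) : ℍ ∈ 𝕋, U ∈ 𝒰}) is splitting. -/
universe u

section Dual

variable {Y Z : Type u} [TopologicalSpace Y] [UniformSpace Z]

/-- A *selection of open witnesses of equi-continuity* assigns to each entourage
`U`, each `f ∈ EC(Y,Z)` and each `y ∈ Y` an open set `U(f,y)` containing `y`
with `f(U(f,y)) ⊆ U[f(y)]`. -/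
def IsSelection (sel : Set (Z × Z) → ↥(EC Y Z) → Y → Set Y) : Prop :=
  ∀ U ∈ uniformity Z, ∀ (f : ↥(EC Y Z)) (y : Y),
    IsOpen (sel U f y) ∧ y ∈ sel U f y ∧ ∀ v ∈ sel U f y, (f.1 y, f.1 v) ∈ U

/-- `𝒪_Z(Y)`: the collection of all selected open sets `U(f,y)`. -/
def OZ (sel : Set (Z × Z) → ↥(EC Y Z) → Y → Set Y) : Set (Set Y) :=
  {V | ∃ U ∈ uniformity Z, ∃ (f : ↥(EC Y Z)) (y : Y), V = sel U f y}

/-- For `ℍ ⊆ 𝒪_Z(Y)` and an entourage `U`,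
`(ℍ,U) = {f ∈ EC(Y,Z) | U(f,y) ∈ ℍ for every y ∈ Y}`. -/
def ECSet (sel : Set (Z × Z) → ↥(EC Y Z) → Y → Set Y)
    (ℍ : Set ↥(OZ sel)) (U : Set (Z × Z)) : Set ↥(EC Y Z) :=
  {f | ∀ y : Y, sel U f y ∈ Subtype.val '' ℍ}

/-- For `ℋ ⊆ EC(Y,Z)` and an entourage `U`,
`(ℋ,U) = {U(f,y) | f ∈ ℋ, y ∈ Y}`, as a subset of `𝒪_Z(Y)`. -/
def OZSet (sel : Set (Z × Z) → ↥(EC Y Z) → Y → Set Y)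
    (ℋ : Set ↥(EC Y Z)) (U : Set (Z × Z)) : Set ↥(OZ sel) :=
  {o | ∃ f ∈ ℋ, ∃ y : Y, o.1 = sel U f y}

/-- The dual topology `𝔗(𝕋)` on `EC(Y,Z)` of a topology `𝕋` on `𝒪_Z(Y)`:
generated by the subbasis `{(ℍ,U) | ℍ ∈ 𝕋, U ∈ 𝒰}`. -/
def dualTopEC (sel : Set (Z × Z) → ↥(EC Y Z) → Y → Set Y)
    (TO : TopologicalSpace ↥(OZ sel)) : TopologicalSpace ↥(EC Y Z) :=
  TopologicalSpace.generateFrom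
    {S | ∃ (ℍ : Set ↥(OZ sel)) (U : Set (Z × Z)),
      (letI := TO; IsOpen ℍ) ∧ U ∈ uniformity Z ∧ S = ECSet sel ℍ U}

/-- The dual topology `𝕋(𝔗)` on `𝒪_Z(Y)` of a topology `𝔗` on `EC(Y,Z)`:
generated by the subbasis `{(ℋ,U) | ℋ ∈ 𝔗, U ∈ 𝒰}`. -/
def dualTopOZ (sel : Set (Z × Z) → ↥(EC Y Z) → Y → Set Y)
    (T : TopologicalSpace ↥(EC Y Z)) : TopologicalSpace ↥(OZ sel) :=
  TopologicalSpace.generateFrom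
    {S | ∃ (ℋ : Set ↥(EC Y Z)) (U : Set (Z × Z)),
      (letI := T; IsOpen ℋ) ∧ U ∈ uniformity Z ∧ S = OZSet sel ℋ U}

/-- The multifunction `ḡ : X × 𝒰 → 𝒪_Z(Y)` associated with `g* : X → EC(Y,Z)`:
`ḡ(x,U) = {U(g*(x),y) | y ∈ Y}`. -/
def gbar (sel : Set (Z × Z) → ↥(EC Y Z) → Y → Set Y) {X : Type u}
    (g' : X → ↥(EC Y Z)) (U : Set (Z × Z)) (x : X) : Set ↥(OZ sel) :=
  {o | ∃ y : Y, o.1 = sel U (g' x) y}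

/-- `ḡ` is *upper semicontinuous with respect to the first variable* (for the
topology `TO` on `𝒪_Z(Y)`): for each fixed entourage `U`, the multifunction
`x ↦ ḡ(x,U)` is upper semicontinuous. -/
def USCFirst (sel : Set (Z × Z) → ↥(EC Y Z) → Y → Set Y)
    (TO : TopologicalSpace ↥(OZ sel)) {X : Type u} [TopologicalSpace X]
    (g' : X → ↥(EC Y Z)) : Prop :=
  ∀ U ∈ uniformity Z, ∀ x : X, ∀ ℍ : Set ↥(OZ sel), (letI := TO; IsOpen ℍ) →
    gbar sel g' U x ⊆ ℍ →
    ∃ V : Set X, IsOpen V ∧ x ∈ V ∧ ∀ x' ∈ V, gbar sel g' U x' ⊆ ℍ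

/-- A topology `TO` on `𝒪_Z(Y)` is *splitting* if for every topological space `X`,
equi-continuity of `g : X × Y → Z` implies upper semicontinuity with respect to the
first variable of `ḡ`. -/
def SplittingO (sel : Set (Z × Z) → ↥(EC Y Z) → Y → Set Y)
    (TO : TopologicalSpace ↥(OZ sel)) : Prop :=
  ∀ (X : Type u) [TopologicalSpace X] (g' : X → ↥(EC Y Z)),
    EquiContinuous (fun p : X × Y => (g' p.1).1 p.2) → USCFirst sel TO g'

/-- A topology `TO` on `𝒪_Z(Y)` is *admissible* if for every topological space `X`
and every map `g* : X → EC(Y,Z)`, upper semicontinuity with respect to the first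
variable of `ḡ` implies equi-continuity of `g`. -/
def AdmissibleO (sel : Set (Z × Z) → ↥(EC Y Z) → Y → Set Y)
    (TO : TopologicalSpace ↥(OZ sel)) : Prop :=
  ∀ (X : Type u) [TopologicalSpace X] (g' : X → ↥(EC Y Z)),
    USCFirst sel TO g' → EquiContinuous (fun p : X × Y => (g' p.1).1 p.2)

end Dual

/-!
`ḡ(x,U) ⊆ ℍ` says exactly that `g*(x) ∈ (ℍ,U)`. Hence upper semicontinuity of `ḡ` in the first
variable says that `g*` pulls every subbasic open set `(ℍ,U)` of the dual topology `𝔗(𝕋)` back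
to an open set, i.e. that `g*` is continuous for `𝔗(𝕋)`; this holds for every `g*`, so the two
splitting conditions coincide.
-/

section Dual

open scoped Topology

variable {Y Z : Type u} [TopologicalSpace Y] [UniformSpace Z]
  (sel : Set (Z × Z) → ↥(EC Y Z) → Y → Set Y)

theorem gbar_subset_iff_mem_ECSet {X : Type u} (g' : X → ↥(EC Y Z)) {U : Set (Z × Z)}
    (hU : U ∈ uniformity Z) (x : X) (ℍ : Set ↥(OZ sel)) :
    gbar sel g' U x ⊆ ℍ ↔ g' x ∈ ECSet sel ℍ U := by
  constructor
  · intro h y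
    exact ⟨⟨_, U, hU, g' x, y, rfl⟩, h ⟨y, rfl⟩, rfl⟩
  · rintro h o ⟨y, hy⟩
    obtain ⟨o', ho', hval⟩ := h y
    rwa [← Subtype.ext (hval.trans hy.symm)]

theorem uscFirst_iff_continuous_dualTopEC (TO : TopologicalSpace ↥(OZ sel)) {X : Type u}
    [TopologicalSpace X] (g' : X → ↥(EC Y Z)) :
    USCFirst sel TO g' ↔ Continuous[‹_›, dualTopEC sel TO] g' := by
  rw [dualTopEC, continuous_generateFrom_iff]
  constructor
  · rintro h _ ⟨ℍ, U, hℍ, hU, rfl⟩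
    refine isOpen_iff_forall_mem_open.2 fun x hx => ?_
    obtain ⟨V, hV, hxV, hVℍ⟩ := h U hU x ℍ hℍ ((gbar_subset_iff_mem_ECSet sel g' hU x ℍ).2 hx)
    exact ⟨V, fun x' hx' => (gbar_subset_iff_mem_ECSet sel g' hU x' ℍ).1 (hVℍ x' hx'), hV, hxV⟩
  · intro h U hU x ℍ hℍ hx
    exact ⟨g' ⁻¹' ECSet sel ℍ U, h _ ⟨ℍ, U, hℍ, hU, rfl⟩,
      (gbar_subset_iff_mem_ECSet sel g' hU x ℍ).1 hx,
      fun x' hx' => (gbar_subset_iff_mem_ECSet sel g' hU x' ℍ).2 hx'⟩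

end Dual

theorem splittingO_iff_dual_splitting_general {Y Z : Type u} [TopologicalSpace Y]
    [UniformSpace Z] (sel : Set (Z × Z) → ↥(EC Y Z) → Y → Set Y)
    (TO : TopologicalSpace ↥(OZ sel)) :
    SplittingO sel TO ↔ Splitting (dualTopEC sel TO) := by
  refine forall_congr' fun X => ⟨fun h _ g' hg => ?_, fun h _ g' hg => ?_⟩
  · exact (uscFirst_iff_continuous_dualTopEC sel TO g').1 (h g' hg)
  · exact (uscFirst_iff_continuous_dualTopEC sel TO g').2 (h g' hg)

/-- a topology `𝕋` on `𝒪_Z(Y)` is splitting iff its dual topology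
`𝔗(𝕋)` on `EC(Y,Z)` is splitting. -/
theorem splittingO_iff_dual_splitting {Y Z : Type u} [TopologicalSpace Y]
    [UniformSpace Z] (sel : Set (Z × Z) → ↥(EC Y Z) → Y → Set Y)
    (hsel : IsSelection sel) (TO : TopologicalSpace ↥(OZ sel)) :
    SplittingO sel TO ↔ Splitting (dualTopEC sel TO) :=
  splittingO_iff_dual_splitting_general sel TO
end
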